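/- arXiv:1603.05702 — 5 statements merged into one kernel-verified Lean document; each statement's English description precedes it below -/
import Mathlib

section
/- Let (A, t, e, j) be a weakly counital fusion morphism in a braided monoidal category C and m := (j⊗1)∘t. Then the short fusion equation holds: (m⊗1)∘(c⁻¹⊗1)∘(1⊗t)∘(c⊗1)∘(1⊗t) = t∘(m⊗1) as morphisms A⊗A⊗A → A⊗A. -/
/-!
STATEMENT 1: For a weakly counital fusion morphism `(A, t, e, j)` in a braided
monoidal category `C`, with `m := (j ⊗ 1) ∘ t`, the short fusion equation holds:
`(m ⊗ 1) ∘ (c⁻¹ ⊗ 1) ∘ (1 ⊗ t) ∘ (c ⊗ 1) ∘ (1 ⊗ t) = t ∘ (m ⊗ 1)` as morphisms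
`A ⊗ A ⊗ A ⟶ A ⊗ A`.

All morphisms on triple tensor products are written with the bracketing
`A ⊗ (A ⊗ A)`, inserting associators where needed.
-/

open CategoryTheory Category MonoidalCategory

universe v u

namespace WeakMultiplierBimonoid

variable {C : Type u} [Category.{v} C] [MonoidalCategory C] [BraidedCategory C]

/-- For `f : A ⊗ A ⟶ A ⊗ A`, the morphism `f ⊗ 1 : A ⊗ (A ⊗ A) ⟶ A ⊗ (A ⊗ A)`. -/
def wl {A : C} (f : A ⊗ A ⟶ A ⊗ A) : A ⊗ (A ⊗ A) ⟶ A ⊗ (A ⊗ A) :=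
  (α_ A A A).inv ≫ (f ▷ A) ≫ (α_ A A A).hom

/-- For `f : A ⊗ A ⟶ A`, the morphism `f ⊗ 1 : A ⊗ (A ⊗ A) ⟶ A ⊗ A`. -/
def ml {A : C} (f : A ⊗ A ⟶ A) : A ⊗ (A ⊗ A) ⟶ A ⊗ A :=
  (α_ A A A).inv ≫ (f ▷ A)

theorem short_fusion_equation_of_weakly_counital_fusion_morphism
    (A : C) (t e : A ⊗ A ⟶ A ⊗ A) (j : A ⟶ 𝟙_ C)
    (m : A ⊗ A ⟶ A) (hm : m = t ≫ (j ▷ A) ≫ (λ_ A).hom)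
    -- Axiom I (the fusion equation)
    (axI : (A ◁ t) ≫ wl (β_ A A).hom ≫ (A ◁ t) ≫ wl (β_ A A).inv ≫ wl t
      = wl t ≫ (A ◁ t))
    -- Axiom II
    (axII : e ≫ e = e)
    -- Axiom III
    (axIII : t ≫ e = t)
    -- Axiom IV
    (axIV : (A ◁ e) ≫ (A ◁ (β_ A A).inv) ≫ wl t ≫ (A ◁ (β_ A A).hom) ≫ ml m
      = (A ◁ (β_ A A).inv) ≫ wl t ≫ (A ◁ (β_ A A).hom) ≫ ml m)
    -- Axiom V
    (axV : (A ◁ t) ≫ wl e = wl e ≫ (A ◁ t))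
    -- Axiom VI
    (axVI : wl t ≫ (A ◁ e)
      = (A ◁ (β_ A A).inv) ≫ wl e ≫ (A ◁ (β_ A A).hom) ≫ wl t)
    -- Axiom VII
    (axVII : wl t ≫ (A ◁ ((j ▷ A) ≫ (λ_ A).hom)) ≫ m
      = (A ◁ (β_ A A).hom) ≫ (A ◁ e) ≫ (A ◁ ((A ◁ j) ≫ (ρ_ A).hom)) ≫ m)
    -- Axiom VIII
    (axVIII : wl t ≫ (A ◁ (β_ A A).hom) ≫ ml m ≫ (j ▷ A) ≫ (λ_ A).hom
      = (A ◁ (β_ A A).hom) ≫ (A ◁ e) ≫ (A ◁ ((j ▷ A) ≫ (λ_ A).hom)) ≫ m) :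
    (A ◁ t) ≫ wl (β_ A A).hom ≫ (A ◁ t) ≫ wl (β_ A A).inv ≫ ml m
      = ml m ≫ t := by
  have hL : ml m = wl t ≫ ((j ▷ (A ⊗ A)) ≫ (λ_ (A ⊗ A)).hom) := by
    simp only [ml, wl, hm, comp_whiskerRight, Category.assoc]
    congr 2
    simp [whiskerRight_tensor]
  have hcomm : (A ◁ t) ≫ ((j ▷ (A ⊗ A)) ≫ (λ_ (A ⊗ A)).hom)
      = ((j ▷ (A ⊗ A)) ≫ (λ_ (A ⊗ A)).hom) ≫ t := by
    rw [whisker_exchange_assoc, leftUnitor_naturality, Category.assoc]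
  rw [hL, reassoc_of% axI, hcomm]
  simp

end WeakMultiplierBimonoid
end

section
/- Let A be a semigroup in a braided monoidal category C whose multiplication m is non-degenerate with respect to some class of objects containing A. Suppose (t₁,t₂,t₃,t₄) and (t₁′,t₂′,t₃′,t₄′) are two quadruples of morphisms A⊗A → A⊗A each satisfying all six compatibility relations (c12)–(c34) with respect to m. If tᵢ = tᵢ′ for some single index i ∈ {1,2,3,4}, then tⱼ = tⱼ′ for every j ∈ {1,2,3,4}. -/
open CategoryTheory Category MonoidalCategory

universe v u

namespace WeakMultiplierBimonoid

variable {C : Type u} [Category.{v} C] [MonoidalCategory C] [BraidedCategory C]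

/-- A morphism `v : Z ⊗ V ⟶ W` is non-degenerate on the left with respect to a class
`𝒴` of objects if for every `X` and every `Y ∈ 𝒴` the map
`Hom(X, V ⊗ Y) → Hom(Z ⊗ X, W ⊗ Y)`, `g ↦ (v ⊗ 1) ∘ (1 ⊗ g)`, is injective. -/
def NdLeftOn {Z V W : C} (v : Z ⊗ V ⟶ W) (𝒴 : Set C) : Prop :=
  ∀ (X : C), ∀ Y ∈ 𝒴, Function.Injective
    (fun g : X ⟶ V ⊗ Y => (Z ◁ g) ≫ (α_ Z V Y).inv ≫ (v ▷ Y))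

/-- Non-degenerate on the right with respect to `𝒴`: `v ∘ c` is non-degenerate on the
left with respect to `𝒴`. -/
def NdRightOn {Z V W : C} (v : Z ⊗ V ⟶ W) (𝒴 : Set C) : Prop :=
  NdLeftOn ((β_ V Z).hom ≫ v) 𝒴

/-- Relation (c12): `(m ⊗ 1) ∘ (1 ⊗ t₁) = (1 ⊗ m) ∘ (t₂ ⊗ 1)`. -/
def C12 {A : C} (m : A ⊗ A ⟶ A) (t₁ t₂ : A ⊗ A ⟶ A ⊗ A) : Prop :=
  (A ◁ t₁) ≫ ml m = wl t₂ ≫ (A ◁ m)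

/-- Relation (c13): `(1 ⊗ m) ∘ (1 ⊗ c) ∘ (t₁ ⊗ 1) = (1 ⊗ m) ∘ (t₃ ⊗ 1) ∘ (1 ⊗ c)`. -/
def C13 {A : C} (m : A ⊗ A ⟶ A) (t₁ t₃ : A ⊗ A ⟶ A ⊗ A) : Prop :=
  wl t₁ ≫ (A ◁ (β_ A A).hom) ≫ (A ◁ m)
    = (A ◁ (β_ A A).hom) ≫ wl t₃ ≫ (A ◁ m)

/-- Relation (c14): `(m ⊗ 1) ∘ (c ⊗ 1) ∘ (1 ⊗ t₁) = (1 ⊗ m) ∘ (t₄ ⊗ 1)`. -/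
def C14 {A : C} (m : A ⊗ A ⟶ A) (t₁ t₄ : A ⊗ A ⟶ A ⊗ A) : Prop :=
  (A ◁ t₁) ≫ wl (β_ A A).hom ≫ ml m = wl t₄ ≫ (A ◁ m)

/-- Relation (c23): `(1 ⊗ m) ∘ (1 ⊗ c) ∘ (t₂ ⊗ 1) = (m ⊗ 1) ∘ (1 ⊗ t₃)`. -/
def C23 {A : C} (m : A ⊗ A ⟶ A) (t₂ t₃ : A ⊗ A ⟶ A ⊗ A) : Prop :=
  wl t₂ ≫ (A ◁ (β_ A A).hom) ≫ (A ◁ m) = (A ◁ t₃) ≫ ml m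

/-- Relation (c24): `(m ⊗ 1) ∘ (c ⊗ 1) ∘ (1 ⊗ t₂) = (m ⊗ 1) ∘ (1 ⊗ t₄) ∘ (c ⊗ 1)`. -/
def C24 {A : C} (m : A ⊗ A ⟶ A) (t₂ t₄ : A ⊗ A ⟶ A ⊗ A) : Prop :=
  (A ◁ t₂) ≫ wl (β_ A A).hom ≫ ml m = wl (β_ A A).hom ≫ (A ◁ t₄) ≫ ml m

/-- Relation (c34): `(m ⊗ 1) ∘ (c ⊗ 1) ∘ (1 ⊗ t₃) = (1 ⊗ m) ∘ (1 ⊗ c) ∘ (t₄ ⊗ 1)`. -/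
def C34 {A : C} (m : A ⊗ A ⟶ A) (t₃ t₄ : A ⊗ A ⟶ A ⊗ A) : Prop :=
  (A ◁ t₃) ≫ wl (β_ A A).hom ≫ ml m = wl t₄ ≫ (A ◁ (β_ A A).hom) ≫ (A ◁ m)

/-!
Each relation (cij) has one side in which `tᵢ` and the other in which `tⱼ` occurs in one of four
shapes: `(m ⊗ 1) ∘ (1 ⊗ t)`, `(m ⊗ 1) ∘ (c ⊗ 1) ∘ (1 ⊗ t)`, `(1 ⊗ m) ∘ (t ⊗ 1)` or
`(1 ⊗ m) ∘ (1 ⊗ c) ∘ (t ⊗ 1)`. Non-degeneracy of `m` says that `t` can be cancelled from each of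
these shapes (for the last two after conjugating by braidings, which moves `t` to the right leg
as `c^{±1} ∘ t`). So each of (c12), (c14), (c23) lets the two components it relates determine
each other, and these three relations connect all four indices.
-/

section Braiding

variable (X Y Z : C)

lemma braiding_tensor_right_assoc_braiding_inv :
    (β_ X (Y ⊗ Z)).hom ≫ (α_ Y Z X).hom ≫ (β_ (Z ⊗ X) Y).inv
      = (X ◁ (β_ Z Y).inv) ≫ (α_ X Z Y).inv ≫ ((β_ X Z).hom ▷ Y) := by
  rw [← assoc, Iso.comp_inv_eq]
  simp only [BraidedCategory.braiding_tensor_right_hom, BraidedCategory.braiding_tensor_left_hom,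
    assoc, Iso.inv_hom_id, comp_id]
  rw [← cancel_epi (X ◁ (β_ Z Y).hom)]
  simpa only [whiskerLeft_hom_inv_assoc] using (BraidedCategory.yang_baxter X Z Y).symm

lemma braiding_tensor_left_inv_assoc_braiding :
    (β_ (Y ⊗ Z) X).inv ≫ (α_ Y Z X).hom ≫ (Y ◁ (β_ Z X).hom) ≫ (β_ Y (X ⊗ Z)).hom
      = (X ◁ (β_ Y Z).hom) ≫ (α_ X Z Y).inv := by
  rw [← cancel_epi (β_ (Y ⊗ Z) X).hom, Iso.hom_inv_id_assoc]
  simp only [BraidedCategory.braiding_tensor_left_hom, BraidedCategory.braiding_tensor_right_hom,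
    assoc]

end Braiding

section Cancellation

variable {A : C} (m : A ⊗ A ⟶ A) (t : A ⊗ A ⟶ A ⊗ A)

lemma braiding_conj_wl_comp_whiskerLeft :
    (β_ A (A ⊗ A)).hom ≫ (α_ A A A).hom ≫ wl t ≫ (A ◁ m) ≫ (β_ A A).inv
      = (A ◁ (t ≫ (β_ A A).inv)) ≫ (α_ A A A).inv ≫ (((β_ A A).hom ≫ m) ▷ A) := by
  simp only [wl, assoc, Iso.hom_inv_id_assoc]
  rw [← BraidedCategory.braiding_naturality_right_assoc A t,
    BraidedCategory.braiding_inv_naturality_right,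
    reassoc_of% (braiding_tensor_right_assoc_braiding_inv A A A)]
  simp only [MonoidalCategory.whiskerLeft_comp, MonoidalCategory.comp_whiskerRight, assoc]

lemma braiding_conj_wl_comp_whiskerLeft_braiding :
    (β_ (A ⊗ A) A).inv ≫ (α_ A A A).hom ≫ wl t ≫ (A ◁ (β_ A A).hom) ≫ (A ◁ m) ≫ (β_ A A).hom
      = (A ◁ (t ≫ (β_ A A).hom)) ≫ (α_ A A A).inv ≫ (m ▷ A) := by
  simp only [wl, assoc, Iso.hom_inv_id_assoc]
  rw [← BraidedCategory.braiding_inv_naturality_right_assoc,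
    BraidedCategory.braiding_naturality_right A m,
    reassoc_of% (braiding_tensor_left_inv_assoc_braiding A A A)]
  simp only [MonoidalCategory.whiskerLeft_comp, assoc]

variable {m} {𝒴 : Set C} {t t' : A ⊗ A ⟶ A ⊗ A}

omit [BraidedCategory C] in
lemma eq_of_whiskerLeft_comp_ml_eq (hndl : NdLeftOn m 𝒴) (hA : A ∈ 𝒴)
    (h : (A ◁ t) ≫ ml m = (A ◁ t') ≫ ml m) : t = t' :=
  hndl (A ⊗ A) A hA h

lemma eq_of_whiskerLeft_comp_wl_braiding_ml_eq (hndr : NdRightOn m 𝒴) (hA : A ∈ 𝒴)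
    (h : (A ◁ t) ≫ wl (β_ A A).hom ≫ ml m = (A ◁ t') ≫ wl (β_ A A).hom ≫ ml m) : t = t' := by
  apply hndr (A ⊗ A) A hA
  simpa only [wl, ml, assoc, Iso.hom_inv_id_assoc, MonoidalCategory.comp_whiskerRight] using h

lemma eq_of_wl_comp_whiskerLeft_eq (hndr : NdRightOn m 𝒴) (hA : A ∈ 𝒴)
    (h : wl t ≫ (A ◁ m) = wl t' ≫ (A ◁ m)) : t = t' := by
  rw [← cancel_mono (β_ A A).inv]
  apply hndr (A ⊗ A) A hA
  dsimp only
  rw [← braiding_conj_wl_comp_whiskerLeft, ← braiding_conj_wl_comp_whiskerLeft, reassoc_of% h]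

lemma eq_of_wl_comp_whiskerLeft_braiding_eq (hndl : NdLeftOn m 𝒴) (hA : A ∈ 𝒴)
    (h : wl t ≫ (A ◁ (β_ A A).hom) ≫ (A ◁ m) = wl t' ≫ (A ◁ (β_ A A).hom) ≫ (A ◁ m)) :
    t = t' := by
  rw [← cancel_mono (β_ A A).hom]
  apply hndl (A ⊗ A) A hA
  dsimp only
  rw [← braiding_conj_wl_comp_whiskerLeft_braiding, ← braiding_conj_wl_comp_whiskerLeft_braiding,
    reassoc_of% h]

end Cancellation

theorem corollary_uniqueness_general
    (A : C) (𝒴 : Set C) (hA : A ∈ 𝒴)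
    (m : A ⊗ A ⟶ A)
    (hndl : NdLeftOn m 𝒴) (hndr : NdRightOn m 𝒴)
    (t₁ t₂ t₃ t₄ t₁' t₂' t₃' t₄' : A ⊗ A ⟶ A ⊗ A)
    (h12 : C12 m t₁ t₂) (h14 : C14 m t₁ t₄)
    (h23 : C23 m t₂ t₃)
    (h12' : C12 m t₁' t₂') (h14' : C14 m t₁' t₄')
    (h23' : C23 m t₂' t₃')
    (hsome : t₁ = t₁' ∨ t₂ = t₂' ∨ t₃ = t₃' ∨ t₄ = t₄') :
    t₁ = t₁' ∧ t₂ = t₂' ∧ t₃ = t₃' ∧ t₄ = t₄' := by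
  have e₁_of_e₂ (e₂ : t₂ = t₂') : t₁ = t₁' :=
    eq_of_whiskerLeft_comp_ml_eq hndl hA (by rw [h12, h12', e₂])
  have e₂_of_e₁ (e₁ : t₁ = t₁') : t₂ = t₂' :=
    eq_of_wl_comp_whiskerLeft_eq hndr hA (by rw [← h12, ← h12', e₁])
  have e₁_of_e₄ (e₄ : t₄ = t₄') : t₁ = t₁' :=
    eq_of_whiskerLeft_comp_wl_braiding_ml_eq hndr hA (by rw [h14, h14', e₄])
  have e₄_of_e₁ (e₁ : t₁ = t₁') : t₄ = t₄' :=
    eq_of_wl_comp_whiskerLeft_eq hndr hA (by rw [← h14, ← h14', e₁])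
  have e₂_of_e₃ (e₃ : t₃ = t₃') : t₂ = t₂' :=
    eq_of_wl_comp_whiskerLeft_braiding_eq hndl hA (by rw [h23, h23', e₃])
  have e₃_of_e₂ (e₂ : t₂ = t₂') : t₃ = t₃' :=
    eq_of_whiskerLeft_comp_ml_eq hndl hA (by rw [← h23, ← h23', e₂])
  have e₁ : t₁ = t₁' := by
    rcases hsome with e₁ | e₂ | e₃ | e₄
    · exact e₁
    · exact e₁_of_e₂ e₂
    · exact e₁_of_e₂ (e₂_of_e₃ e₃)
    · exact e₁_of_e₄ e₄
  exact ⟨e₁, e₂_of_e₁ e₁, e₃_of_e₂ (e₂_of_e₁ e₁), e₄_of_e₁ e₁⟩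

/-- Corollary 2.5: if two quadruples, each satisfying all six
compatibility relations with respect to `m`, agree in one component then they agree
in all components. -/
theorem corollary_uniqueness
    (A : C) (𝒴 : Set C) (hA : A ∈ 𝒴)
    (m : A ⊗ A ⟶ A)
    (hassoc : ml m ≫ m = (A ◁ m) ≫ m)
    (hndl : NdLeftOn m 𝒴) (hndr : NdRightOn m 𝒴)
    (t₁ t₂ t₃ t₄ t₁' t₂' t₃' t₄' : A ⊗ A ⟶ A ⊗ A)
    (h12 : C12 m t₁ t₂) (h13 : C13 m t₁ t₃) (h14 : C14 m t₁ t₄)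
    (h23 : C23 m t₂ t₃) (h24 : C24 m t₂ t₄) (h34 : C34 m t₃ t₄)
    (h12' : C12 m t₁' t₂') (h13' : C13 m t₁' t₃') (h14' : C14 m t₁' t₄')
    (h23' : C23 m t₂' t₃') (h24' : C24 m t₂' t₄') (h34' : C34 m t₃' t₄')
    (hsome : t₁ = t₁' ∨ t₂ = t₂' ∨ t₃ = t₃' ∨ t₄ = t₄') :
    t₁ = t₁' ∧ t₂ = t₂' ∧ t₃ = t₃' ∧ t₄ = t₄' :=
  corollary_uniqueness_general A 𝒴 hA m hndl hndr t₁ t₂ t₃ t₄ t₁' t₂' t₃' t₄' h12 h14 h23 h12' h14'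
    h23' hsome

end WeakMultiplierBimonoid
end

section
/- Let A be a semigroup with non-degenerate multiplication m in a braided monoidal closed category C, and suppose the multiplier monoid 𝕄(A) exists. Then h₁ : 𝕄(A)⊗A → A is non-degenerate on the right and h₂ : A⊗𝕄(A) → A is non-degenerate on the left. -/
open CategoryTheory Category MonoidalCategory

universe v u

namespace WeakMultiplierBimonoid

variable {C : Type u} [Category.{v} C] [MonoidalCategory C] [BraidedCategory C]

/-- A morphism `v : Z ⊗ V ⟶ W` is non-degenerate on the left if for every object `X`
the map `Hom(X, V) → Hom(Z ⊗ X, W)`, `g ↦ v ∘ (1 ⊗ g)`, is injective. -/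
def NdLeft {Z V W : C} (v : Z ⊗ V ⟶ W) : Prop :=
  ∀ X : C, Function.Injective (fun g : X ⟶ V => (Z ◁ g) ≫ v)

/-- `v` is non-degenerate on the right if `v ∘ c` is non-degenerate on the left. -/
def NdRight {Z V W : C} (v : Z ⊗ V ⟶ W) : Prop :=
  NdLeft ((β_ V Z).hom ≫ v)

/-- Proposition 6.1: for a semigroup `A` with non-degenerate
multiplication in a braided monoidal closed category whose multiplier monoid `𝕄(A)`
exists, the morphism `h₁ : 𝕄(A) ⊗ A ⟶ A` is non-degenerate on the right and
`h₂ : A ⊗ 𝕄(A) ⟶ A` is non-degenerate on the left.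

The multiplier monoid is encoded by its universal property: morphisms `f : X ⟶ 𝕄(A)`
correspond bijectively, via `f₁ := h₁ ∘ (f ⊗ 1)` and `f₂ := h₂ ∘ (1 ⊗ f)`, to pairs
`(f₁, f₂)` satisfying `m ∘ (f₂ ⊗ 1) = m ∘ (1 ⊗ f₁)`. -/
theorem multiplier_monoid_dense
    [MonoidalClosed C]
    (A : C) (m : A ⊗ A ⟶ A)
    (hassoc : ml m ≫ m = (A ◁ m) ≫ m)
    (hndl : NdLeft m) (hndr : NdRight m)
    (M : C) (h₁ : M ⊗ A ⟶ A) (h₂ : A ⊗ M ⟶ A)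
    (hcompat : (α_ A M A).inv ≫ (h₂ ▷ A) ≫ m = (A ◁ h₁) ≫ m)
    (huniv : ∀ (X : C) (f₁ : X ⊗ A ⟶ A) (f₂ : A ⊗ X ⟶ A),
      (α_ A X A).inv ≫ (f₂ ▷ A) ≫ m = (A ◁ f₁) ≫ m →
      ∃! f : X ⟶ M, (f ▷ A) ≫ h₁ = f₁ ∧ (A ◁ f) ≫ h₂ = f₂) :
    NdRight h₁ ∧ NdLeft h₂ := by
  -- Compatibility identity for the pair induced by any `g : X ⟶ M`.
  have compat : ∀ (X : C) (g : X ⟶ M),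
      (α_ A X A).inv ≫ (((A ◁ g) ≫ h₂) ▷ A) ≫ m
        = (A ◁ ((g ▷ A) ≫ h₁)) ≫ m := by
    intro X g
    have hnat : (α_ A X A).inv ≫ ((A ◁ g) ▷ A)
        = (A ◁ (g ▷ A)) ≫ (α_ A M A).inv := by
      simp
    rw [comp_whiskerRight, MonoidalCategory.whiskerLeft_comp, assoc,
      reassoc_of% hnat, hcompat, ← assoc]
  -- Injectivity of `k ↦ (k ▷ A) ≫ m` (from `hndr`).
  have hndr' : ∀ (Y : C) (k k' : Y ⟶ A),
      (k ▷ A) ≫ m = (k' ▷ A) ≫ m → k = k' := by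
    intro Y k k' h
    apply hndr Y
    have : ∀ (l : Y ⟶ A), (A ◁ l) ≫ ((β_ A A).hom ≫ m)
        = (β_ A Y).hom ≫ (l ▷ A) ≫ m := by
      intro l
      rw [← assoc, BraidedCategory.braiding_naturality_right, assoc]
    simpa [this, h] using (this k').symm ▸ rfl
  constructor
  · -- NdRight h₁
    intro X g g' hgg'
    simp only at hgg'
    -- rewrite assumption to `(g ▷ A) ≫ h₁ = (g' ▷ A) ≫ h₁`
    have h1eq : (g ▷ A) ≫ h₁ = (g' ▷ A) ≫ h₁ := by
      have e : ∀ (l : X ⟶ M), (A ◁ l) ≫ ((β_ A M).hom ≫ h₁)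
          = (β_ A X).hom ≫ (l ▷ A) ≫ h₁ := by
        intro l
        rw [← assoc, BraidedCategory.braiding_naturality_right, assoc]
      rw [e, e] at hgg'
      exact (Iso.cancel_iso_hom_left (β_ A X) _ _).mp hgg'
    have h2eq : (A ◁ g) ≫ h₂ = (A ◁ g') ≫ h₂ := by
      apply hndr'
      have c1 := compat X g
      have c2 := compat X g'
      rw [h1eq] at c1
      exact (Iso.cancel_iso_inv_left (α_ A X A) _ _).mp (c1.trans c2.symm)
    obtain ⟨f, _, hu⟩ := huniv X ((g ▷ A) ≫ h₁) ((A ◁ g) ≫ h₂) (compat X g)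
    have hg : g = f := hu g ⟨rfl, rfl⟩
    have hg' : g' = f := hu g' ⟨h1eq.symm, h2eq.symm⟩
    rw [hg, hg']
  · -- NdLeft h₂
    intro X g g' hgg'
    simp only at hgg'
    have h1eq : (g ▷ A) ≫ h₁ = (g' ▷ A) ≫ h₁ := by
      apply hndl
      have c1 := compat X g
      have c2 := compat X g'
      rw [hgg'] at c1
      show A ◁ (g ▷ A ≫ h₁) ≫ m = A ◁ (g' ▷ A ≫ h₁) ≫ m
      rw [← c1, c2]
    obtain ⟨f, _, hu⟩ := huniv X ((g ▷ A) ≫ h₁) ((A ◁ g) ≫ h₂) (compat X g)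
    have hg : g = f := hu g ⟨rfl, rfl⟩
    have hg' : g' = f := hu g' ⟨h1eq.symm, hgg'.symm⟩
    rw [hg, hg']

end WeakMultiplierBimonoid
end

section
/- Let A be a semigroup with non-degenerate multiplication m in a braided monoidal closed category C such that the multiplier monoid 𝕄(A) exists, and let f : X → 𝕄(A) be a morphism with components f₁ := h₁∘(f⊗1) and f₂ := h₂∘(1⊗f). Then the following are equivalent: (i) f is a monomorphism; (ii) f₁ is non-degenerate on the right; (iii) f₂ is non-degenerate on the left. In particular, the morphism i : A → 𝕄(A) both of whose components are equal to m is a monomorphism. -/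
open CategoryTheory Category MonoidalCategory

universe v u

namespace WeakMultiplierBimonoid

variable {C : Type u} [Category.{v} C] [MonoidalCategory C] [BraidedCategory C]

/-- Corollary 6.2: for a semigroup `A` with non-degenerate
multiplication in a braided monoidal closed category whose multiplier monoid `𝕄(A)`
exists (encoded by its universal property), a morphism `f : X ⟶ 𝕄(A)` is a
monomorphism iff its first component is non-degenerate on the right, iff its second
component is non-degenerate on the left.  In particular, the morphism `i : A ⟶ 𝕄(A)`
both of whose components equal `m` is a monomorphism. -/
theorem multiplier_monoid_mono_iff_nondegenerate
    [MonoidalClosed C]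
    (A : C) (m : A ⊗ A ⟶ A)
    (hassoc : ml m ≫ m = (A ◁ m) ≫ m)
    (hndl : NdLeft m) (hndr : NdRight m)
    (M : C) (h₁ : M ⊗ A ⟶ A) (h₂ : A ⊗ M ⟶ A)
    (hcompat : (α_ A M A).inv ≫ (h₂ ▷ A) ≫ m = (A ◁ h₁) ≫ m)
    (huniv : ∀ (X : C) (f₁ : X ⊗ A ⟶ A) (f₂ : A ⊗ X ⟶ A),
      (α_ A X A).inv ≫ (f₂ ▷ A) ≫ m = (A ◁ f₁) ≫ m →
      ∃! f : X ⟶ M, (f ▷ A) ≫ h₁ = f₁ ∧ (A ◁ f) ≫ h₂ = f₂) :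
    (∀ (X : C) (f : X ⟶ M),
      (Mono f ↔ NdRight ((f ▷ A) ≫ h₁)) ∧
      (Mono f ↔ NdLeft ((A ◁ f) ≫ h₂))) ∧
    (∀ i : A ⟶ M, (i ▷ A) ≫ h₁ = m → (A ◁ i) ≫ h₂ = m → Mono i) := by
  -- compatibility for the components of any morphism into `M`
  have compat : ∀ (Y : C) (u : Y ⟶ M),
      (α_ A Y A).inv ≫ (((A ◁ u) ≫ h₂) ▷ A) ≫ m = (A ◁ ((u ▷ A) ≫ h₁)) ≫ m := by
    intro Y u
    simp only [comp_whiskerRight, MonoidalCategory.whiskerLeft_comp, assoc]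
    rw [← hcompat]
    slice_rhs 1 2 => rw [associator_inv_naturality_middle]
    simp only [assoc]
  -- a morphism into M is determined by its second component
  have hinj₂ : ∀ (Y : C) (u u' : Y ⟶ M), (A ◁ u) ≫ h₂ = (A ◁ u') ≫ h₂ → u = u' := by
    intro Y u u' h
    have e1 : (u ▷ A) ≫ h₁ = (u' ▷ A) ≫ h₁ := by
      apply hndl (Y ⊗ A)
      show (A ◁ ((u ▷ A) ≫ h₁)) ≫ m = (A ◁ ((u' ▷ A) ≫ h₁)) ≫ m
      rw [← compat Y u, ← compat Y u', h]
    obtain ⟨w, _, hw⟩ := huniv Y ((u ▷ A) ≫ h₁) ((A ◁ u) ≫ h₂) (compat Y u)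
    rw [hw u ⟨rfl, rfl⟩, hw u' ⟨e1.symm, h.symm⟩]
  -- a morphism into M is determined by its first component
  have hinj₁ : ∀ (Y : C) (u u' : Y ⟶ M), (u ▷ A) ≫ h₁ = (u' ▷ A) ≫ h₁ → u = u' := by
    intro Y u u' h
    have e2 : (A ◁ u) ≫ h₂ = (A ◁ u') ≫ h₂ := by
      have e3 : (((A ◁ u) ≫ h₂) ▷ A) ≫ m = (((A ◁ u') ≫ h₂) ▷ A) ≫ m := by
        have e4 := compat Y u
        rw [h, ← compat Y u'] at e4
        simpa only [assoc] using (cancel_epi (α_ A Y A).inv).mp e4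
      apply hndr (A ⊗ Y)
      show (A ◁ ((A ◁ u) ≫ h₂)) ≫ (β_ A A).hom ≫ m
          = (A ◁ ((A ◁ u') ≫ h₂)) ≫ (β_ A A).hom ≫ m
      rw [← assoc, BraidedCategory.braiding_naturality_right, assoc, e3,
        ← assoc, ← BraidedCategory.braiding_naturality_right, assoc]
    obtain ⟨w, _, hw⟩ := huniv Y ((u ▷ A) ≫ h₁) ((A ◁ u) ≫ h₂) (compat Y u)
    rw [hw u ⟨rfl, rfl⟩, hw u' ⟨h.symm, e2.symm⟩]
  have main : ∀ (X : C) (f : X ⟶ M),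
      (Mono f ↔ NdRight ((f ▷ A) ≫ h₁)) ∧
      (Mono f ↔ NdLeft ((A ◁ f) ≫ h₂)) := by
    intro X f
    have key₁ : ∀ (Y : C) (g : Y ⟶ X),
        (A ◁ g) ≫ ((β_ A X).hom ≫ ((f ▷ A) ≫ h₁)) = (β_ A Y).hom ≫ ((g ≫ f) ▷ A) ≫ h₁ := by
      intro Y g
      rw [← assoc, BraidedCategory.braiding_naturality_right, assoc, comp_whiskerRight, assoc]
    have key₂ : ∀ (Y : C) (g : Y ⟶ X),
        (A ◁ g) ≫ ((A ◁ f) ≫ h₂) = (A ◁ (g ≫ f)) ≫ h₂ := by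
      intro Y g
      rw [MonoidalCategory.whiskerLeft_comp, assoc]
    constructor
    · constructor
      · intro hf Y g g' h
        simp only [key₁] at h
        have h' : ((g ≫ f) ▷ A) ≫ h₁ = ((g' ≫ f) ▷ A) ≫ h₁ := by
          have := (cancel_epi (β_ A Y).hom).mp h
          simpa only [assoc] using this
        exact (cancel_mono f).mp (hinj₁ Y (g ≫ f) (g' ≫ f) h')
      · intro hnd
        constructor
        intro Y g g' h
        apply hnd Y
        show (A ◁ g) ≫ ((β_ A X).hom ≫ ((f ▷ A) ≫ h₁))
            = (A ◁ g') ≫ ((β_ A X).hom ≫ ((f ▷ A) ≫ h₁))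
        rw [key₁, key₁, h]
    · constructor
      · intro hf Y g g' h
        simp only [key₂] at h
        exact (cancel_mono f).mp (hinj₂ Y (g ≫ f) (g' ≫ f) h)
      · intro hnd
        constructor
        intro Y g g' h
        apply hnd Y
        show (A ◁ g) ≫ ((A ◁ f) ≫ h₂) = (A ◁ g') ≫ ((A ◁ f) ≫ h₂)
        rw [key₂, key₂, h]
  refine ⟨main, ?_⟩
  intro i hi₁ _
  exact ((main A i).1).mpr (by rw [hi₁]; exact hndr)

end WeakMultiplierBimonoid
end

section
/- Let C be a braided monoidal closed category and let 𝒴 be the class of all objects Y of C such that (a) Y⊗− preserves monomorphisms and (b) for all objects X, Z the canonical morphism q := [X, ev⊗1]∘coev : [X,Z]⊗Y → [X, Z⊗Y] is a monomorphism. Then for any morphism v : Z⊗V → W the following assertions are equivalent: (i) for every object X the map Hom(X, V) → Hom(Z⊗X, W), f ↦ v∘(1⊗f), is injective (v is non-degenerate on the left); (ii) [Z, v]∘coev : V → [Z, W] is a monomorphism; (iii) for every object X and every Y ∈ 𝒴 the map Hom(X, V⊗Y) → Hom(Z⊗X, W⊗Y), g ↦ (v⊗1)∘(1⊗g), is injective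 (v is non-degenerate on the left with respect to 𝒴); (iv) for every Y ∈ 𝒴 the morphism [Z, v⊗1]∘coev : V⊗Y → [Z, W⊗Y] is a monomorphism. -/
open CategoryTheory Category MonoidalCategory

universe v u

namespace WeakMultiplierBimonoid

variable {C : Type u} [Category.{v} C] [MonoidalCategory C] [BraidedCategory C]
  [MonoidalClosed C]

/-- The canonical morphism `q : [X,Z] ⊗ Y ⟶ [X, Z ⊗ Y]`,
`q := [X, ev ⊗ 1] ∘ coev`. -/
def qCan (X Z Y : C) : ((ihom X).obj Z) ⊗ Y ⟶ (ihom X).obj (Z ⊗ Y) :=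
  (ihom.coev X).app (((ihom X).obj Z) ⊗ Y) ≫
    (ihom X).map ((α_ X ((ihom X).obj Z) Y).inv ≫ ((ihom.ev X).app Z ▷ Y))

/-- The distinguished class `𝒴`: objects `Y` such that (a) `Y ⊗ −` preserves
monomorphisms, and (b) for all `X`, `Z` the canonical morphism
`q : [X,Z] ⊗ Y ⟶ [X, Z ⊗ Y]` is a monomorphism. -/
def goodClass (C : Type u) [Category.{v} C] [MonoidalCategory C] [BraidedCategory C]
    [MonoidalClosed C] : Set C :=
  {Y : C | (∀ ⦃X X' : C⦄ (f : X ⟶ X'), Mono f → Mono (Y ◁ f)) ∧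
    (∀ X Z : C, Mono (qCan X Z Y))}

open MonoidalClosed

/-- `qCan` is the curry of `α⁻¹ ≫ ev ▷ Y`. -/
lemma qCan_eq_curry (X Z Y : C) :
    qCan X Z Y = curry ((α_ X ((ihom X).obj Z) Y).inv ≫ ((ihom.ev X).app Z ▷ Y)) := by
  rw [qCan, curry_eq]

/-- Mono of curry is equivalent to injectivity of the composition maps. -/
lemma mono_curry_iff {Z V W : C} (v : Z ⊗ V ⟶ W) :
    Mono (curry v) ↔ ∀ X : C, Function.Injective (fun g : X ⟶ V => (Z ◁ g) ≫ v) := by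
  constructor
  · intro h X g g' hgg'
    simp only at hgg'
    have : g ≫ curry v = g' ≫ curry v := by
      apply uncurry_injective
      rw [uncurry_natural_left, uncurry_natural_left, uncurry_curry]
      exact hgg'
    exact (cancel_mono (curry v)).mp this
  · intro h
    constructor
    intro X g g' hgg'
    apply h X
    simp only
    conv_lhs => rw [← uncurry_curry v, ← uncurry_natural_left, hgg', uncurry_natural_left,
      uncurry_curry]

lemma whiskerRight_mono {Y A B : C} (f : A ⟶ B) [Mono f]
    (hY : ∀ ⦃X X' : C⦄ (g : X ⟶ X'), Mono g → Mono (Y ◁ g)) : Mono (f ▷ Y) := by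
  have : f ▷ Y = (β_ A Y).hom ≫ (Y ◁ f) ≫ (β_ B Y).inv := by
    rw [← BraidedCategory.braiding_naturality_left_assoc, Iso.hom_inv_id, Category.comp_id]
  rw [this]
  have := hY f inferInstance
  exact mono_comp _ _

lemma unit_mem_goodClass : (𝟙_ C) ∈ goodClass C := by
  constructor
  · intro X X' f hf
    have : (𝟙_ C) ◁ f = (λ_ X).hom ≫ f ≫ (λ_ X').inv := by
      rw [← leftUnitor_naturality_assoc, Iso.hom_inv_id, Category.comp_id]
    rw [this]
    exact mono_comp _ _
  · intro X Z
    have hfac : qCan X Z (𝟙_ C) ≫ (ihom X).map (ρ_ Z).hom = (ρ_ ((ihom X).obj Z)).hom := by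
      apply uncurry_injective
      rw [qCan_eq_curry, uncurry_natural_right, uncurry_curry, uncurry_eq]
      simp
    haveI : Mono (qCan X Z (𝟙_ C) ≫ (ihom X).map (ρ_ Z).hom) := hfac ▸ inferInstance
    exact mono_of_mono _ ((ihom X).map (ρ_ Z).hom)

/-- Proposition 6.12: in a braided monoidal closed category, for any
morphism `v : Z ⊗ V ⟶ W` the following are equivalent: (i) `v` is non-degenerate on
the left; (ii) `[Z, v] ∘ coev : V ⟶ [Z, W]` is a monomorphism; (iii) `v` is
non-degenerate on the left with respect to the class `𝒴`; (iv) for every `Y ∈ 𝒴` the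
morphism `[Z, v ⊗ 1] ∘ coev : V ⊗ Y ⟶ [Z, W ⊗ Y]` is a monomorphism. -/
theorem nondegenerate_tfae
    (Z V W : C) (v : Z ⊗ V ⟶ W) :
    [NdLeft v,
     Mono ((ihom.coev Z).app V ≫ (ihom Z).map v),
     NdLeftOn v (goodClass C),
     ∀ Y ∈ goodClass C,
       Mono ((ihom.coev Z).app (V ⊗ Y) ≫
         (ihom Z).map ((α_ Z V Y).inv ≫ (v ▷ Y)))].TFAE := by
  have e2 : (ihom.coev Z).app V ≫ (ihom Z).map v = curry v := (curry_eq v).symm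
  have e4 : ∀ Y : C, (ihom.coev Z).app (V ⊗ Y) ≫
      (ihom Z).map ((α_ Z V Y).inv ≫ (v ▷ Y)) = curry ((α_ Z V Y).inv ≫ (v ▷ Y)) :=
    fun Y => (curry_eq _).symm
  tfae_have 1 ↔ 2 := by
    rw [e2, NdLeft, mono_curry_iff]
    rfl
  tfae_have 3 ↔ 4 := by
    constructor
    · intro h Y hY
      rw [e4]
      rw [mono_curry_iff]
      intro X
      have := h X Y hY
      simpa using this
    · intro h X Y hY
      have := h Y hY
      rw [e4, mono_curry_iff] at this
      simpa using this X
  tfae_have 2 → 4 := by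
    intro h Y hY
    rw [e2] at h
    rw [e4]
    have hfac : curry ((α_ Z V Y).inv ≫ (v ▷ Y)) = (curry v ▷ Y) ≫ qCan Z W Y := by
      apply uncurry_injective
      rw [uncurry_curry, uncurry_natural_left, qCan_eq_curry, uncurry_curry,
        associator_inv_naturality_middle_assoc, ← comp_whiskerRight, ← uncurry_eq, uncurry_curry]
    rw [hfac]
    have h1 : Mono (curry v ▷ Y) := whiskerRight_mono (curry v) hY.1
    have h2 : Mono (qCan Z W Y) := hY.2 Z W
    exact mono_comp _ _
  tfae_have 4 → 2 := by
    intro h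
    rw [e2]
    have h' := h (𝟙_ C) unit_mem_goodClass
    rw [e4] at h'
    have hfac : curry ((α_ Z V (𝟙_ C)).inv ≫ (v ▷ 𝟙_ C)) =
        (ρ_ V).hom ≫ curry v ≫ (ihom Z).map (ρ_ W).inv := by
      apply uncurry_injective
      rw [uncurry_curry, uncurry_natural_left, uncurry_natural_right, uncurry_curry]
      simp
    rw [hfac] at h'
    haveI h1 : Mono ((ρ_ V).hom ≫ curry v ≫ (ihom Z).map (ρ_ W).inv) := h'
    haveI h2 : Mono (curry v ≫ (ihom Z).map (ρ_ W).inv) := by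
      have e : curry v ≫ (ihom Z).map (ρ_ W).inv =
          (ρ_ V).inv ≫ ((ρ_ V).hom ≫ curry v ≫ (ihom Z).map (ρ_ W).inv) := by simp
      rw [e]; exact mono_comp _ _
    exact mono_of_mono (curry v) ((ihom Z).map (ρ_ W).inv)
  tfae_finish

end WeakMultiplierBimonoid
end
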